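/- Let B_i = R ⊗_{R^{s_i}} R (with R = ℂ[x_1,…,x_n]) be the elementary Bott–Samelson bimodule with structure maps m(f_1 ⊗ f_2 ⊗ g_1 ⊗ g_2) = f_1 · ∂_i(f_2 g_1) ⊗ g_2 (from B_i ⊗_R B_i → B_i), Δ(f ⊗ g) = f ⊗ 1 ⊗ 1 ⊗ g, η(f ⊗ g) = f·g, and ε(f) = (1/2)(α_i ⊗ 1 + 1 ⊗ α_i)·f. Then (B_i, m, Δ, ε, η) is a Frobenius object in the category of R-bimodules: m is associative with unit ε, Δ is coassociative with counit η, and the Frobenius condition (id ⊗ m)∘(Δ ⊗ id) = Δ∘m = (m ⊗ id)∘(id ⊗ Δ) holds. -/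

import Mathlib

open MvPolynomial TensorProduct

noncomputable section

/-- `R = ℂ[x_1,…,x_n]`. -/
abbrev PolyR (n : ℕ) := MvPolynomial (Fin n) ℂ

/-- The subalgebra of `s_i`-invariant polynomials in `ℂ[x_1,…,x_n]`. -/
def invariantSub (n : ℕ) (i j : Fin n) : Subalgebra ℂ (PolyR n) :=
  AlgHom.equalizer (rename (Equiv.swap i j)) (AlgHom.id ℂ (PolyR n))

/-- `B_i = R ⊗_{R^{s_i}} R` as a `ℂ`-vector space. -/
abbrev BS (n : ℕ) (i j : Fin n) := PolyR n ⊗[invariantSub n i j] PolyR n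

/-- `B_i ⊗_R B_i ≅ R ⊗_{R^{s_i}} R ⊗_{R^{s_i}} R`. -/
abbrev BS2 (n : ℕ) (i j : Fin n) := PolyR n ⊗[invariantSub n i j] BS n i j

/-- `B_i ⊗_R B_i ⊗_R B_i ≅ R ⊗_{R^{s_i}} R ⊗_{R^{s_i}} R ⊗_{R^{s_i}} R`. -/
abbrev BS3 (n : ℕ) (i j : Fin n) := PolyR n ⊗[invariantSub n i j] BS2 n i j

/-!
Each identity is additive in its argument, so it suffices to check it on pure tensors. There,
associativity is the `R^{s_i}`-linearity of `∂_i` applied to the invariant `∂_i y`; the Frobenius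
relations hold because `∂_i h` is invariant and so passes through `⊗_{R^{s_i}}`; and the unit laws
come from `∂_i (α_i f) = f + s_i f`, which together with `α_i ∂_i f = f - s_i f` adds up to `2 f`.
These properties of `∂_i` follow from its defining identity by cancelling `α_i ≠ 0` in the domain
`R`.
-/

namespace TensorProduct

variable {R M N P : Type*} [CommSemiring R] [AddCommMonoid M] [AddCommMonoid N] [Module R M]
  [Module R N] [Add P]

theorem eq_of_additive_of_tmul {f g : M ⊗[R] N → P} (hf : ∀ a b, f (a + b) = f a + f b)
    (hg : ∀ a b, g (a + b) = g a + g b) (h : ∀ m n, f (m ⊗ₜ n) = g (m ⊗ₜ n)) :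
    ∀ x, f x = g x := by
  intro x
  induction x using TensorProduct.induction_on with
  | zero => simpa only [zero_tmul] using h 0 0
  | tmul m n => exact h m n
  | add a b ha hb => rw [hf, hg, ha, hb]

end TensorProduct

/- Stated for the concrete types: for a general `M ⊗[R] (N ⊗[R] Q)` the instances elaborated in the
statement agree with those of `BS2` only up to unfolding, and `rw` with hypotheses about maps out
of `BS2` then fails to match. -/
namespace BS2

variable {n : ℕ} {i j : Fin n} {P : Type*} [Add P]

theorem eq_of_additive_of_tmul {f g : BS2 n i j → P}
    (hf : ∀ a b, f (a + b) = f a + f b) (hg : ∀ a b, g (a + b) = g a + g b)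
    (h : ∀ x y z, f (x ⊗ₜ (y ⊗ₜ z)) = g (x ⊗ₜ (y ⊗ₜ z))) : ∀ w, f w = g w :=
  TensorProduct.eq_of_additive_of_tmul hf hg fun x =>
    TensorProduct.eq_of_additive_of_tmul (f := fun v => f (x ⊗ₜ v)) (g := fun v => g (x ⊗ₜ v))
      (fun a b => by rw [tmul_add, hf]) (fun a b => by rw [tmul_add, hg]) (h x)

end BS2

namespace BS3

variable {n : ℕ} {i j : Fin n} {P : Type*} [Add P]

theorem eq_of_additive_of_tmul {f g : BS3 n i j → P}
    (hf : ∀ a b, f (a + b) = f a + f b) (hg : ∀ a b, g (a + b) = g a + g b)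
    (h : ∀ x y z t, f (x ⊗ₜ (y ⊗ₜ (z ⊗ₜ t))) = g (x ⊗ₜ (y ⊗ₜ (z ⊗ₜ t)))) : ∀ w, f w = g w :=
  TensorProduct.eq_of_additive_of_tmul hf hg fun x =>
    BS2.eq_of_additive_of_tmul (f := fun v => f (x ⊗ₜ v)) (g := fun v => g (x ⊗ₜ v))
      (fun a b => by rw [tmul_add, hf]) (fun a b => by rw [tmul_add, hg]) (h x)

end BS3

namespace Subalgebra

variable {R A : Type*} [CommSemiring R] [CommSemiring A] [Algebra R A] {S : Subalgebra R A}
  {c : A}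

theorem mul_tmul_of_mem (x : A) (hc : c ∈ S) (y : A) : (x * c) ⊗ₜ[S] y = x ⊗ₜ[S] (c * y) := by
  simpa only [smul_def, smul_eq_mul, mul_comm x] using smul_tmul (⟨c, hc⟩ : S) x y

theorem mul_tmul_tmul_of_mem (x : A) (hc : c ∈ S) (y z : A) :
    (x * c) ⊗ₜ[S] (y ⊗ₜ[S] z) = x ⊗ₜ[S] ((c * y) ⊗ₜ[S] z) := by
  simpa only [smul_def, smul_eq_mul, mul_comm x, smul_tmul'] using
    smul_tmul (⟨c, hc⟩ : S) x (y ⊗ₜ[S] z)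

end Subalgebra

section Demazure

variable {A F : Type*} [CommRing A] [IsDomain A] [FunLike F A A] [RingHomClass F A A]
  {s : F} {α : A} {D : A → A}

theorem demazure_mul_of_invariant (hα : α ≠ 0) (hD : ∀ f, α * D f = f - s f) {c : A}
    (hc : s c = c) (f : A) : D (f * c) = D f * c :=
  mul_left_cancel₀ hα <| by rw [hD, map_mul, hc]; linear_combination (-c) * hD f

theorem demazure_root_mul (hα : α ≠ 0) (hsα : s α = -α) (hD : ∀ f, α * D f = f - s f)
    (f : A) : D (α * f) = f + s f :=
  mul_left_cancel₀ hα <| by rw [hD, map_mul, hsα]; ring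

theorem demazure_invariant (hs : ∀ f, s (s f) = f) (hα : α ≠ 0) (hsα : s α = -α)
    (hD : ∀ f, α * D f = f - s f) (f : A) : s (D f) = D f := by
  have hsD := congrArg s (hD f)
  rw [map_mul, hsα, map_sub, hs] at hsD
  exact mul_left_cancel₀ hα <| by linear_combination -hsD - hD f

end Demazure

namespace MvPolynomial

variable {σ R : Type*}

theorem rename_swap_rename_swap [DecidableEq σ] [CommSemiring R] (i j : σ)
    (p : MvPolynomial σ R) :
    rename (Equiv.swap i j) (rename (Equiv.swap i j) p) = p := by
  rw [rename_rename, ← Equiv.coe_trans, Equiv.swap_swap, Equiv.coe_refl, rename_id_apply]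

theorem rename_swap_X_sub_X [DecidableEq σ] [CommRing R] (i j : σ) :
    rename (Equiv.swap i j) (X i - X j : MvPolynomial σ R) = -(X i - X j) := by
  simp

theorem X_sub_X_ne_zero [CommRing R] [Nontrivial R] {i j : σ} (hij : i ≠ j) :
    (X i - X j : MvPolynomial σ R) ≠ 0 :=
  sub_ne_zero.2 (X_injective.ne hij)

theorem C_half_add_C_half : (C (1 / 2 : ℂ) + C (1 / 2 : ℂ) : MvPolynomial σ ℂ) = 1 := by
  rw [← C_add]; norm_num

end MvPolynomial

namespace BS

variable {n : ℕ} {i j : Fin n} {D : PolyR n → PolyR n}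

theorem demazure_mem_invariantSub (hij : i ≠ j)
    (hD : ∀ f, (X i - X j) * D f = f - rename (Equiv.swap i j) f) (f : PolyR n) :
    D f ∈ invariantSub n i j :=
  demazure_invariant (rename_swap_rename_swap i j) (X_sub_X_ne_zero hij)
    (rename_swap_X_sub_X i j) hD f

theorem unit_left_tmul (hij : i ≠ j)
    (hD : ∀ f, (X i - X j) * D f = f - rename (Equiv.swap i j) f) (f g : PolyR n) :
    (C (1 / 2 : ℂ) * (X i - X j) * D f) ⊗ₜ[invariantSub n i j] g +
      (C (1 / 2 : ℂ) * D ((X i - X j) * f)) ⊗ₜ[invariantSub n i j] g =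
      f ⊗ₜ[invariantSub n i j] g := by
  rw [← add_tmul, demazure_root_mul (X_sub_X_ne_zero hij) (rename_swap_X_sub_X i j) hD]
  congr 1
  linear_combination C (1 / 2 : ℂ) * hD f + f * C_half_add_C_half

theorem unit_right_tmul (hij : i ≠ j)
    (hD : ∀ f, (X i - X j) * D f = f - rename (Equiv.swap i j) f) (f g : PolyR n) :
    (f * D (g * (X i - X j) * C (1 / 2 : ℂ))) ⊗ₜ[invariantSub n i j] (1 : PolyR n) +
      (f * D (g * C (1 / 2 : ℂ))) ⊗ₜ[invariantSub n i j] (X i - X j) =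
      f ⊗ₜ[invariantSub n i j] g := by
  rw [Subalgebra.mul_tmul_of_mem f (demazure_mem_invariantSub hij hD _),
    Subalgebra.mul_tmul_of_mem f (demazure_mem_invariantSub hij hD _), ← tmul_add,
    show g * (X i - X j) * C (1 / 2) = (X i - X j) * (g * C (1 / 2)) by ring,
    demazure_root_mul (X_sub_X_ne_zero hij) (rename_swap_X_sub_X i j) hD]
  congr 1
  linear_combination hD (g * C (1 / 2 : ℂ)) + g * C_half_add_C_half

end BS

/-- The Bott–Samelson bimodule `B_i` with multiplication
`m(f₁ ⊗ f₂ ⊗ g₁ ⊗ g₂) = f₁·∂_i(f₂g₁) ⊗ g₂`, comultiplication `Δ(f ⊗ g) = f ⊗ 1 ⊗ 1 ⊗ g`,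
counit (of the comonoid) `η(f ⊗ g) = fg` and unit (of the monoid)
`ε(f) = (1/2)(α_i ⊗ 1 + 1 ⊗ α_i)·f` is a Frobenius object in `R`-bimodules:
`m` is associative with unit `ε`, `Δ` is coassociative with counit `η`, and the
Frobenius condition `(id ⊗ m)∘(Δ ⊗ id) = Δ∘m = (m ⊗ id)∘(id ⊗ Δ)` holds.  All maps are
written on the identifications of iterated `⊗_R`-powers of `B_i` with iterated tensor
products of `R` over `R^{s_i}` and are determined by additivity and their values on pure
tensors, which are hypothesized; `D = ∂_i` is the Demazure operator, characterized by
`(x_i - x_{i+1}) * D f = f - s_i f`. -/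
theorem stmt_7 (n : ℕ) (i j : Fin n) (hij : (i : ℕ) + 1 = (j : ℕ))
    (D : PolyR n → PolyR n)
    (hD : ∀ f, (X i - X j) * D f = f - rename (Equiv.swap i j) f)
    -- the multiplication `m : B_i ⊗_R B_i → B_i` and its variants `m ⊗ id`, `id ⊗ m`
    (m2 : BS2 n i j → BS n i j)
    (hm2_add : ∀ a b, m2 (a + b) = m2 a + m2 b)
    (hm2 : ∀ x h y : PolyR n, m2 (x ⊗ₜ (h ⊗ₜ y)) = (x * D h) ⊗ₜ y)
    (mL : BS3 n i j → BS2 n i j)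
    (hmL_add : ∀ a b, mL (a + b) = mL a + mL b)
    (hmL : ∀ x h y z : PolyR n, mL (x ⊗ₜ (h ⊗ₜ (y ⊗ₜ z))) = (x * D h) ⊗ₜ (y ⊗ₜ z))
    (mR : BS3 n i j → BS2 n i j)
    (hmR_add : ∀ a b, mR (a + b) = mR a + mR b)
    (hmR : ∀ x y h z : PolyR n, mR (x ⊗ₜ (y ⊗ₜ (h ⊗ₜ z))) = x ⊗ₜ ((y * D h) ⊗ₜ z))
    -- the comultiplication `Δ : B_i → B_i ⊗_R B_i` and its variants `Δ ⊗ id`, `id ⊗ Δ`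
    (Δ2 : BS n i j → BS2 n i j)
    (hΔ2_add : ∀ a b, Δ2 (a + b) = Δ2 a + Δ2 b)
    (hΔ2 : ∀ f g : PolyR n, Δ2 (f ⊗ₜ g) = f ⊗ₜ ((1 : PolyR n) ⊗ₜ g))
    (ΔL : BS2 n i j → BS3 n i j)
    (hΔL_add : ∀ a b, ΔL (a + b) = ΔL a + ΔL b)
    (hΔL : ∀ x h y : PolyR n, ΔL (x ⊗ₜ (h ⊗ₜ y)) = x ⊗ₜ ((1 : PolyR n) ⊗ₜ (h ⊗ₜ y)))
    (ΔR : BS2 n i j → BS3 n i j)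
    (hΔR_add : ∀ a b, ΔR (a + b) = ΔR a + ΔR b)
    (hΔR : ∀ x h y : PolyR n, ΔR (x ⊗ₜ (h ⊗ₜ y)) = x ⊗ₜ (h ⊗ₜ ((1 : PolyR n) ⊗ₜ y)))
    -- the unit `ε : R → B_i`, tensored on the left/right with `id_{B_i}`
    (εL : BS n i j → BS2 n i j)
    (hεL_add : ∀ a b, εL (a + b) = εL a + εL b)
    (hεL : ∀ f g : PolyR n, εL (f ⊗ₜ g) =
      (MvPolynomial.C (1/2 : ℂ) * (X i - X j)) ⊗ₜ (f ⊗ₜ g) +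
        MvPolynomial.C (1/2 : ℂ) ⊗ₜ (((X i - X j) * f) ⊗ₜ g))
    (εR : BS n i j → BS2 n i j)
    (hεR_add : ∀ a b, εR (a + b) = εR a + εR b)
    (hεR : ∀ f g : PolyR n, εR (f ⊗ₜ g) =
      f ⊗ₜ ((g * (X i - X j) * MvPolynomial.C (1/2 : ℂ)) ⊗ₜ (1 : PolyR n)) +
        f ⊗ₜ ((g * MvPolynomial.C (1/2 : ℂ)) ⊗ₜ (X i - X j)))
    -- the counit `η : B_i → R`, tensored on the left/right with `id_{B_i}`
    (ηL : BS2 n i j → BS n i j)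
    (hηL_add : ∀ a b, ηL (a + b) = ηL a + ηL b)
    (hηL : ∀ x h y : PolyR n, ηL (x ⊗ₜ (h ⊗ₜ y)) = (x * h) ⊗ₜ y)
    (ηR : BS2 n i j → BS n i j)
    (hηR_add : ∀ a b, ηR (a + b) = ηR a + ηR b)
    (hηR : ∀ x h y : PolyR n, ηR (x ⊗ₜ (h ⊗ₜ y)) = x ⊗ₜ (h * y)) :
    -- associativity of `m`
    (∀ w : BS3 n i j, m2 (mL w) = m2 (mR w)) ∧
    -- unit laws for `ε`
    (∀ v : BS n i j, m2 (εL v) = v) ∧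
    (∀ v : BS n i j, m2 (εR v) = v) ∧
    -- coassociativity of `Δ`
    (∀ v : BS n i j, ΔL (Δ2 v) = ΔR (Δ2 v)) ∧
    -- counit laws for `η`
    (∀ v : BS n i j, ηL (Δ2 v) = v) ∧
    (∀ v : BS n i j, ηR (Δ2 v) = v) ∧
    -- the Frobenius condition
    (∀ w : BS2 n i j, mR (ΔL w) = Δ2 (m2 w) ∧ mL (ΔR w) = Δ2 (m2 w)) := by
  have hne : i ≠ j := Fin.ne_of_val_ne (by omega)
  have hDinv := BS.demazure_mem_invariantSub hne hD
  refine ⟨?assoc, ?unit_left, ?unit_right, ?coassoc, ?counit_left, ?counit_right,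
    forall_and.2 ⟨?frobenius_left, ?frobenius_right⟩⟩
  case assoc =>
    refine BS3.eq_of_additive_of_tmul (fun a b => by rw [hmL_add, hm2_add])
      (fun a b => by rw [hmR_add, hm2_add]) fun x h y z => ?_
    rw [hmL, hmR, hm2, hm2, demazure_mul_of_invariant (X_sub_X_ne_zero hne) hD (hDinv y),
      mul_assoc]
  case unit_left =>
    exact TensorProduct.eq_of_additive_of_tmul (fun a b => by rw [hεL_add, hm2_add])
      (fun _ _ => rfl) fun f g => by rw [hεL, hm2_add, hm2, hm2, BS.unit_left_tmul hne hD]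
  case unit_right =>
    exact TensorProduct.eq_of_additive_of_tmul (fun a b => by rw [hεR_add, hm2_add])
      (fun _ _ => rfl) fun f g => by rw [hεR, hm2_add, hm2, hm2, BS.unit_right_tmul hne hD]
  case coassoc =>
    exact TensorProduct.eq_of_additive_of_tmul (fun a b => by rw [hΔ2_add, hΔL_add])
      (fun a b => by rw [hΔ2_add, hΔR_add]) fun f g => by rw [hΔ2, hΔL, hΔR]
  case counit_left =>
    exact TensorProduct.eq_of_additive_of_tmul (fun a b => by rw [hΔ2_add, hηL_add])
      (fun _ _ => rfl) fun f g => by rw [hΔ2, hηL, mul_one]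
  case counit_right =>
    exact TensorProduct.eq_of_additive_of_tmul (fun a b => by rw [hΔ2_add, hηR_add])
      (fun _ _ => rfl) fun f g => by rw [hΔ2, hηR, one_mul]
  case frobenius_left =>
    refine BS2.eq_of_additive_of_tmul (fun a b => by rw [hΔL_add, hmR_add])
      (fun a b => by rw [hm2_add, hΔ2_add]) fun x h y => ?_
    rw [hΔL, hmR, hm2, hΔ2, Subalgebra.mul_tmul_tmul_of_mem x (hDinv h), one_mul, mul_one]
  case frobenius_right =>
    exact BS2.eq_of_additive_of_tmul (fun a b => by rw [hΔR_add, hmL_add])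
      (fun a b => by rw [hm2_add, hΔ2_add]) fun x h y => by rw [hΔR, hmL, hm2, hΔ2]
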